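/- arXiv:2507.07022 — 3 statements merged into one kernel-verified Lean document; each statement's English description precedes it below -/
import Mathlib

section
/- Let Gamma be the linear relation graph of I = B_t(u). For every i = 1,...,d, one has |B_i| >= 2 if and only if B_i ⊆ V(Gamma), where B_i = [t_1 + ... + t_{i-1} + 1, j_i]. -/
open Finset MvPolynomial

/-! Common definitions for principal vector-spread Borel ideals
(Crupi–Ficarra–Lax, "Principal vector-spread Borel ideals").

Throughout, `S = K[x_1,…,x_n]` is realized as `MvPolynomial (Fin n) K`, and the
variable `x_p` (1-based position `p ∈ [1,n]`) is `X (p-1)`. -/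

open Fin.NatCast in
/-- The variable `x_p` of `K[x_1,…,x_n]`, for a 1-based position `p ∈ [1,n]`. -/
noncomputable def xv (K : Type*) [Field K] (n : ℕ) [NeZero n] (p : ℕ) :
    MvPolynomial (Fin n) K := MvPolynomial.X ((p - 1 : ℕ) : Fin n)

/-- The squarefree monomial `x_{i 1} ⋯ x_{i e}` determined by the index function `i`. -/
noncomputable def monOf (K : Type*) [Field K] (n : ℕ) [NeZero n] (e : ℕ) (i : ℕ → ℕ) :
    MvPolynomial (Fin n) K := ∏ r ∈ Finset.Icc 1 e, xv K n (i r)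

/-- Index functions of the `t`-spread monomials `x_{i 1} ⋯ x_{i e}` with `i r ≤ J r` for
all `r = 1,…,e`.  (These monomials form the minimal monomial generating set of the
principal `t`-spread Borel ideal `B_t(x_{J 1} ⋯ x_{J e})`.) -/
def spreadIdx (e : ℕ) (t J : ℕ → ℕ) : Set (ℕ → ℕ) :=
  {i | (∀ r, 1 ≤ r → r ≤ e → 1 ≤ i r ∧ i r ≤ J r) ∧
    (∀ r, 1 ≤ r → r + 1 ≤ e → i r + t r ≤ i (r + 1))}

/-- The principal `t`-spread Borel ideal `B_t(x_{J 1} ⋯ x_{J e})`: the ideal generated by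
all `t`-spread monomials `x_{i 1} ⋯ x_{i e}` with `i r ≤ J r` for all `r`. -/
noncomputable def tBorel (K : Type*) [Field K] (n : ℕ) [NeZero n] (e : ℕ) (t J : ℕ → ℕ) :
    Ideal (MvPolynomial (Fin n) K) :=
  Ideal.span ((fun i => monOf K n e i) '' spreadIdx e t J)

/-- The monomial prime ideal `P_A = (x_p : p ∈ A)`, for a set `A` of 1-based positions. -/
noncomputable def pA (K : Type*) [Field K] (n : ℕ) [NeZero n] (A : Set ℕ) :
    Ideal (MvPolynomial (Fin n) K) := Ideal.span (xv K n '' A)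

/-- The `t`-spread support `supp_t(x_{i 1} ⋯ x_{i e}) = ⋃_{s=1}^{e-1} [i s, i s + t s - 1]`. -/
def tSupp (e : ℕ) (t : ℕ → ℕ) (i : ℕ → ℕ) : Set ℕ :=
  ⋃ s ∈ Finset.Icc 1 (e - 1), Set.Icc (i s) (i s + t s - 1)

/-- The `k`-th symbolic power of a (squarefree monomial) ideal: the intersection of the
`k`-th powers of its minimal primes. -/
noncomputable def symbPow {R : Type*} [CommRing R] (I : Ideal R) (k : ℕ) : Ideal R :=
  ⨅ P ∈ I.minimalPrimes, P ^ k

/-- The Alexander dual `⨅_{v} P_{supp v}` of the squarefree monomial ideal whose minimal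
monomial generators are the degree `e` squarefree monomials indexed by `gen`. -/
noncomputable def alexDualOf (K : Type*) [Field K] (n : ℕ) [NeZero n] (e : ℕ)
    (gen : Set (ℕ → ℕ)) : Ideal (MvPolynomial (Fin n) K) :=
  ⨅ i ∈ gen, pA K n (i '' Set.Icc 1 e)

/-- The height of an ideal: the infimum of the heights of its minimal primes, the height
of a prime being its height in the poset of prime ideals. -/
noncomputable def idealHeight {R : Type*} [CommRing R] (I : Ideal R) : ℕ∞ :=
  ⨅ (p : PrimeSpectrum R) (_ : p.asIdeal ∈ I.minimalPrimes), Order.height p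

/-- The depth of the module `M` with respect to the ideal `P`: the supremum of the lengths
of `M`-regular sequences consisting of elements of `P`. -/
noncomputable def depthWrt (R : Type*) (M : Type*) [CommRing R] [AddCommGroup M]
    [Module R M] (P : Ideal R) : ℕ∞ :=
  ⨆ (k : ℕ) (_ : ∃ x : Fin k → R, (∀ a, x a ∈ P) ∧
    RingTheory.Sequence.IsRegular M (List.ofFn x)), (k : ℕ∞)

/-- The (Krull) dimension of a module `M`: the Krull dimension of `R / ann M`. -/
noncomputable def modKrullDim (R : Type*) (M : Type*) [CommRing R] [AddCommGroup M]
    [Module R M] : WithBot ℕ∞ := ringKrullDim (R ⧸ Module.annihilator R M)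

/-- A module is Cohen–Macaulay (with respect to the ideal `P`, e.g. the graded maximal
ideal) if its depth equals its Krull dimension. -/
def IsCohenMacaulayMod (R : Type*) (M : Type*) [CommRing R] [AddCommGroup M] [Module R M]
    (P : Ideal R) : Prop := (depthWrt R M P : WithBot ℕ∞) = modKrullDim R M

/-- The depth of a local ring: max length of a regular sequence in the maximal ideal. -/
noncomputable def ringDepth (A : Type*) [CommRing A] [IsLocalRing A] : ℕ∞ :=
  depthWrt A A (IsLocalRing.maximalIdeal A)

/-- A local ring is Cohen–Macaulay if its depth equals its Krull dimension. -/
def IsCohenMacaulayLocalRing (A : Type*) [CommRing A] [IsLocalRing A] : Prop :=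
  (ringDepth A : WithBot ℕ∞) = ringKrullDim A

/-- A (commutative Noetherian) ring is Cohen–Macaulay if all its localizations at prime
ideals are Cohen–Macaulay local rings. -/
def IsCohenMacaulayRing (A : Type*) [CommRing A] : Prop :=
  ∀ (P : Ideal A) (hP : P.IsPrime), haveI := hP
    IsCohenMacaulayLocalRing (Localization.AtPrime P)

/-- The analytic spread of `I`: the Krull dimension of `R(I)/m R(I)`, where `R(I)` is the
Rees algebra of `I` and `m` the (graded maximal) ideal. -/
noncomputable def analyticSpread {R : Type*} [CommRing R] (m I : Ideal R) : WithBot ℕ∞ :=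
  ringKrullDim (↥(reesAlgebra I) ⧸ Ideal.map (algebraMap R ↥(reesAlgebra I)) m)

/-- `{p,q}` is an edge of the linear relation graph of the monomial ideal whose minimal
generators are the degree `e` squarefree monomials indexed by `gen` (positions 1-based,
within `[1,n]`). -/
def lrEdge (K : Type*) [Field K] (n : ℕ) [NeZero n] (e : ℕ) (gen : Set (ℕ → ℕ))
    (p q : ℕ) : Prop :=
  1 ≤ p ∧ p ≤ n ∧ 1 ≤ q ∧ q ≤ n ∧ p ≠ q ∧
    ∃ i ∈ gen, ∃ i' ∈ gen, xv K n p * monOf K n e i = xv K n q * monOf K n e i'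

/-- A facet of a simplicial complex: a maximal face. -/
def isFacet (Δ : Set (Finset ℕ)) (F : Finset ℕ) : Prop :=
  F ∈ Δ ∧ ∀ G ∈ Δ, F ⊆ G → F = G

/-- Vertex decomposability of a simplicial complex (faces as finsets of vertices):
either a simplex (including the void complex and `{∅}`), or there is a vertex whose
deletion and link are vertex decomposable and every facet of the deletion is a facet. -/
inductive VDecomp : Set (Finset ℕ) → Prop
  | empty : VDecomp ∅
  | simplex (A : Finset ℕ) : VDecomp {F | F ⊆ A}
  | step (Δ : Set (Finset ℕ)) (v : ℕ) (hv : ∃ F ∈ Δ, v ∈ F)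
      (hdel : VDecomp {F ∈ Δ | v ∉ F})
      (hlink : VDecomp {F | F ∈ Δ ∧ v ∉ F ∧ insert v F ∈ Δ})
      (hfac : ∀ F, isFacet {F ∈ Δ | v ∉ F} F → isFacet Δ F) : VDecomp Δ

/-- The `a`-th layer `J (a+1) / J a` of a filtration of ideals, as an `R`-module. -/
abbrev layerOf {R : Type*} [CommRing R] {r : ℕ} (J : Fin (r + 1) → Ideal R) (a : Fin r) :=
  ↥(J a.succ) ⧸ (Submodule.comap (J a.succ).subtype (J a.castSucc))

/-! Two consecutive positions `a < a + 1` of `B_r` are joined in `Γ`: keep the `r`-th factor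
of a generator at `a` or `a + 1`, the other factors packed as tightly as the `t`-spread
condition allows, and the two generators differ exactly by `x_a ↔ x_{a+1}`. Conversely, if
`B_r = {j_r}`, then every generator has `x_{j_r}` as its `r`-th factor; since the generators
are squarefree, `x_{j_r}` occurs twice in `x_{j_r} w` but at most once in `x_q w'` for `q ≠ j_r`,
so `j_r` lies on no edge. -/

open Fin.NatCast

section SpreadIndices

variable {e : ℕ} {t i J : ℕ → ℕ}

theorem add_sum_Ico_le_of_step {a b : ℕ} (hab : a ≤ b)
    (hstep : ∀ k, a ≤ k → k < b → i k + t k ≤ i (k + 1)) :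
    i a + ∑ k ∈ Ico a b, t k ≤ i b := by
  induction b, hab using Nat.le_induction with
  | base => simp
  | succ b hab ih =>
    have hb := hstep b hab (by omega)
    have ih := ih fun k hak hkb => hstep k hak (by omega)
    rw [Finset.sum_Ico_succ_top hab]
    omega

theorem add_sum_Ico_le_of_mem_spreadIdx (hi : i ∈ spreadIdx e t J) {a b : ℕ} (ha : 1 ≤ a)
    (hab : a ≤ b) (hb : b ≤ e) : i a + ∑ k ∈ Ico a b, t k ≤ i b :=
  add_sum_Ico_le_of_step hab fun k hak hkb => hi.2 k (by omega) (by omega)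

theorem sum_Ico_lt_of_mem_spreadIdx (hi : i ∈ spreadIdx e t J) {r : ℕ} (hr : 1 ≤ r)
    (hre : r ≤ e) : ∑ k ∈ Ico 1 r, t k < i r := by
  have hi1 := (hi.1 1 le_rfl (hr.trans hre)).1
  have hchain := add_sum_Ico_le_of_mem_spreadIdx hi le_rfl hr hre
  omega

theorem monotoneOn_of_mem_spreadIdx (hi : i ∈ spreadIdx e t J) : MonotoneOn i (Set.Icc 1 e) :=
  fun _ ha _ hb hab => (Nat.le_add_right _ _).trans
    (add_sum_Ico_le_of_mem_spreadIdx hi ha.1 hab hb.2)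

theorem strictMonoOn_of_mem_spreadIdx (ht : ∀ k, 1 ≤ k → k < e → 1 ≤ t k)
    (hi : i ∈ spreadIdx e t J) : StrictMonoOn i (Set.Icc 1 e) := by
  rintro a ⟨ha, -⟩ b ⟨-, hb⟩ hab
  have hta := ht a ha (by omega)
  calc i a < i a + t a := by omega
    _ ≤ i (a + 1) := hi.2 a ha (by omega)
    _ ≤ i b := monotoneOn_of_mem_spreadIdx hi ⟨by omega, by omega⟩ ⟨by omega, hb⟩ hab

theorem self_mem_spreadIdx (hJ1 : 1 ≤ J 1)
    (hJ : ∀ k, 1 ≤ k → k < e → J k + t k ≤ J (k + 1)) : J ∈ spreadIdx e t J :=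
  ⟨fun r hr hre => ⟨hJ1.trans <| (Nat.le_add_right _ _).trans <|
      add_sum_Ico_le_of_step hr fun k hk hkr => hJ k (by omega) (by omega), le_rfl⟩,
    fun r hr hre => hJ r hr (by omega)⟩

theorem update_mem_spreadIdx {g : ℕ → ℕ} (hg : g ∈ spreadIdx e t J) {r c : ℕ} (hc : 1 ≤ c)
    (hcr : c ≤ g r) (hprev : ∀ s, 1 ≤ s → s + 1 = r → g s + t s ≤ c) :
    Function.update g r c ∈ spreadIdx e t J := by
  refine ⟨fun s hs hse => ?_, fun s hs hse => ?_⟩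
  · rcases eq_or_ne s r with rfl | hsr
    · rw [Function.update_self]
      exact ⟨hc, hcr.trans (hg.1 s hs hse).2⟩
    · rw [Function.update_of_ne hsr]
      exact hg.1 s hs hse
  · have hstep := hg.2 s hs hse
    rcases eq_or_ne s r with rfl | hsr
    · rw [Function.update_self, Function.update_of_ne (by omega)]
      omega
    · rw [Function.update_of_ne hsr]
      rcases eq_or_ne (s + 1) r with hs1 | hs1
      · rw [hs1, Function.update_self]
        exact hprev s hs hs1
      · rwa [Function.update_of_ne hs1]

/-- The componentwise smallest `t`-spread sequence taking the value `b` at position `r`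
(provided `b > t 1 + ⋯ + t (r - 1)`). -/
def packedIdx (t : ℕ → ℕ) (r b s : ℕ) : ℕ :=
  if s < r then ∑ k ∈ Ico 1 s, t k + 1 else b + ∑ k ∈ Ico r s, t k

theorem packedIdx_self (t : ℕ → ℕ) (r b : ℕ) : packedIdx t r b r = b := by
  simp [packedIdx]

theorem packedIdx_mem_spreadIdx (hJ : J ∈ spreadIdx e t J) {r b : ℕ} (hr : 1 ≤ r)
    (hre : r ≤ e) (hb : ∑ k ∈ Ico 1 r, t k < b) (hbJ : b ≤ J r) :
    packedIdx t r b ∈ spreadIdx e t J := by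
  refine ⟨fun s hs hse => ?_, fun s hs hse => ?_⟩
  · unfold packedIdx
    split_ifs with hsr
    · exact ⟨by omega, sum_Ico_lt_of_mem_spreadIdx hJ hs hse⟩
    · have := add_sum_Ico_le_of_mem_spreadIdx hJ hr (not_lt.1 hsr) hse
      omega
  · have hsucc : ∀ a ≤ s, ∑ k ∈ Ico a (s + 1), t k = ∑ k ∈ Ico a s, t k + t s :=
      fun a ha => Finset.sum_Ico_succ_top ha t
    unfold packedIdx
    split_ifs with h1 h2 h2
    · rw [hsucc 1 hs]
      omega
    · obtain rfl : r = s + 1 := by omega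
      rw [hsucc 1 hs] at hb
      simp only [Finset.Ico_self, Finset.sum_empty]
      omega
    · omega
    · rw [hsucc r (by omega)]
      omega

end SpreadIndices

section LinearRelations

variable (K : Type*) [Field K] (n : ℕ) [NeZero n]

theorem xv_mul_monOf_update {e r : ℕ} (hr : r ∈ Icc 1 e) (g : ℕ → ℕ) (c : ℕ) :
    xv K n (g r) * monOf K n e (Function.update g r c) = xv K n c * monOf K n e g := by
  simp only [monOf, Function.apply_update (fun _ => xv K n),
    Finset.prod_update_of_mem hr, Finset.prod_eq_mul_prod_sdiff_singleton_of_mem hr]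
  ring

theorem xv_mul_monOf_eq_monomial (e p : ℕ) (i : ℕ → ℕ) :
    xv K n p * monOf K n e i = monomial (Finsupp.single ((p - 1 : ℕ) : Fin n) 1 +
      ∑ s ∈ Icc 1 e, Finsupp.single ((i s - 1 : ℕ) : Fin n) 1) 1 := by
  simp only [monOf, xv, X, ← monomial_sum_one, monomial_mul, one_mul]

variable {K n}

theorem lrEdge_symm {e : ℕ} {gen : Set (ℕ → ℕ)} {p q : ℕ} :
    lrEdge K n e gen p q → lrEdge K n e gen q p :=
  fun ⟨hp1, hpn, hq1, hqn, hpq, i, hi, i', hi', h⟩ =>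
    ⟨hq1, hqn, hp1, hpn, hpq.symm, i', hi', i, hi, h.symm⟩

theorem lrEdge_succ_self {e r a : ℕ} {t J : ℕ → ℕ} (hJ : J ∈ spreadIdx e t J) (hr : 1 ≤ r)
    (hre : r ≤ e) (ha : ∑ k ∈ Ico 1 r, t k < a) (haJ : a < J r) (hJn : J r ≤ n) :
    lrEdge K n e (spreadIdx e t J) (a + 1) a := by
  set g := packedIdx t r (a + 1)
  have hgr : g r = a + 1 := packedIdx_self t r (a + 1)
  have hg : g ∈ spreadIdx e t J := packedIdx_mem_spreadIdx hJ hr hre (by omega) haJ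
  have hg' : Function.update g r a ∈ spreadIdx e t J := by
    refine update_mem_spreadIdx hg (by omega) (by omega) fun s hs hsr => ?_
    rw [← hsr, Finset.sum_Ico_succ_top hs] at ha
    simp only [g, packedIdx, if_pos (show s < r by omega)]
    omega
  refine ⟨by omega, by omega, by omega, by omega, by omega, _, hg', g, hg, ?_⟩
  simpa only [hgr] using xv_mul_monOf_update K n (mem_Icc.2 ⟨hr, hre⟩) g a

theorem not_lrEdge_of_forall_apply_eq {e r p q : ℕ} {gen : Set (ℕ → ℕ)} (hr : r ∈ Icc 1 e)
    (hinj : ∀ i ∈ gen, Set.InjOn i (Set.Icc 1 e))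
    (hbound : ∀ i ∈ gen, ∀ s ∈ Set.Icc 1 e, i s ∈ Set.Icc 1 n)
    (hforced : ∀ i ∈ gen, i r = p) : ¬ lrEdge K n e gen p q := by
  rintro ⟨hp1, hpn, hq1, hqn, hpq, i, hi, i', hi', h⟩
  have hpos : ∀ a ∈ Set.Icc 1 n, ∀ b ∈ Set.Icc 1 n,
      ((a - 1 : ℕ) : Fin n) = ((b - 1 : ℕ) : Fin n) → a = b := by
    rintro a ⟨ha1, han⟩ b ⟨hb1, hbn⟩ hab
    have := congrArg Fin.val hab
    rw [Fin.val_cast_of_lt (by omega), Fin.val_cast_of_lt (by omega)] at this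
    omega
  rw [xv_mul_monOf_eq_monomial, xv_mul_monOf_eq_monomial] at h
  have hexp := congr($(monomial_left_injective one_ne_zero h) ((p - 1 : ℕ) : Fin n))
  simp only [Finsupp.add_apply, Finsupp.finsetSum_apply, Finsupp.single_apply,
    Finset.sum_boole, Nat.cast_id, if_true] at hexp
  have hqp : ((q - 1 : ℕ) : Fin n) ≠ ((p - 1 : ℕ) : Fin n) :=
    fun hqp => hpq (hpos q ⟨hq1, hqn⟩ p ⟨hp1, hpn⟩ hqp).symm
  have hleft : 1 ≤ #{s ∈ Icc 1 e | ((i s - 1 : ℕ) : Fin n) = ((p - 1 : ℕ) : Fin n)} :=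
    card_pos.2 ⟨r, mem_filter.2 ⟨hr, by rw [hforced i hi]⟩⟩
  have hright : #{s ∈ Icc 1 e | ((i' s - 1 : ℕ) : Fin n) = ((p - 1 : ℕ) : Fin n)} ≤ 1 := by
    refine card_le_one.2 fun a ha b hb => ?_
    rw [mem_filter, ← mem_coe, coe_Icc] at ha hb
    have hia := hpos _ (hbound i' hi' a ha.1) p ⟨hp1, hpn⟩ ha.2
    have hib := hpos _ (hbound i' hi' b hb.1) p ⟨hp1, hpn⟩ hb.2
    exact hinj i' hi' ha.1 hb.1 (hia.trans hib.symm)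
  rw [if_neg hqp] at hexp
  omega

end LinearRelations

theorem stmt12_general (K : Type*) [Field K] (n d : ℕ) [NeZero n] (t j : ℕ → ℕ)
    (ht : ∀ k, 1 ≤ k → k ≤ d - 1 → 1 ≤ t k)
    (hj1 : 1 ≤ j 1)
    (hjd : j d = n) (hspread : ∀ k, 1 ≤ k → k ≤ d - 1 → j k + t k ≤ j (k + 1)) :
    ∀ r, 1 ≤ r → r ≤ d →
      (2 ≤ (Finset.Icc ((∑ s ∈ Finset.Icc 1 (r - 1), t s) + 1) (j r)).card ↔
        ∀ p ∈ Finset.Icc ((∑ s ∈ Finset.Icc 1 (r - 1), t s) + 1) (j r),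
          ∃ q, lrEdge K n d (spreadIdx d t j) p q) := by
  intro r hr hrd
  have hj : j ∈ spreadIdx d t j := self_mem_spreadIdx hj1 fun k hk hkd => hspread k hk (by omega)
  have hjn : ∀ s ∈ Set.Icc 1 d, j s ≤ n := fun s hs =>
    hjd ▸ monotoneOn_of_mem_spreadIdx hj hs ⟨by omega, le_rfl⟩ hs.2
  have hlow := sum_Ico_lt_of_mem_spreadIdx hj hr hrd
  have hr_not_min : ¬ IsMin r := not_isMin_iff_ne_bot.2 (Nat.one_le_iff_ne_zero.1 hr)
  rw [Finset.Icc_sub_one_right_eq_Ico_of_not_isMin hr_not_min, Nat.card_Icc]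
  constructor
  · intro hcard p hp
    obtain ⟨hp1, hpj⟩ := mem_Icc.1 hp
    rcases hpj.lt_or_eq with hpj | rfl
    · exact ⟨p + 1, lrEdge_symm (lrEdge_succ_self hj hr hrd hp1 hpj (hjn r ⟨hr, hrd⟩))⟩
    · refine ⟨j r - 1, ?_⟩
      have := lrEdge_succ_self (K := K) hj hr hrd (a := j r - 1) (by omega) (by omega)
        (hjn r ⟨hr, hrd⟩)
      rwa [Nat.sub_add_cancel (by omega)] at this
  · intro hall
    by_contra hcard
    obtain ⟨q, hq⟩ := hall (j r) (mem_Icc.2 ⟨hlow, le_rfl⟩)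
    refine not_lrEdge_of_forall_apply_eq (mem_Icc.2 ⟨hr, hrd⟩)
      (fun i hi => (strictMonoOn_of_mem_spreadIdx (fun k hk hkd => ht k hk (by omega)) hi).injOn)
      (fun i hi s hs => ⟨(hi.1 s hs.1 hs.2).1, (hi.1 s hs.1 hs.2).2.trans (hjn s hs)⟩)
      (fun i hi => ?_) hq
    have hir_low := sum_Ico_lt_of_mem_spreadIdx hi hr hrd
    have hir_up := (hi.1 r hr hrd).2
    omega

/-- **Proposition (a).** Let `Γ` be the linear relation graph of `I = B_t(u)` and, for
`r = 1,…,d`, let `B_r = [t 1 + ⋯ + t (r-1) + 1, j r]`.  Then `|B_r| ≥ 2` iff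
`B_r ⊆ V(Γ)`. -/
theorem stmt12 (K : Type*) [Field K] (n d : ℕ) [NeZero n] (t j : ℕ → ℕ)
    (hd : 2 ≤ d) (ht : ∀ k, 1 ≤ k → k ≤ d - 1 → 1 ≤ t k)
    (hj1 : 1 ≤ j 1) (hjmono : ∀ p q, 1 ≤ p → p < q → q ≤ d → j p < j q)
    (hjd : j d = n) (hspread : ∀ k, 1 ≤ k → k ≤ d - 1 → j k + t k ≤ j (k + 1)) :
    ∀ r, 1 ≤ r → r ≤ d →
      (2 ≤ (Finset.Icc ((∑ s ∈ Finset.Icc 1 (r - 1), t s) + 1) (j r)).card ↔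
        ∀ p ∈ Finset.Icc ((∑ s ∈ Finset.Icc 1 (r - 1), t s) + 1) (j r),
          ∃ q, lrEdge K n d (spreadIdx d t j) p q) :=
  stmt12_general K n d t j ht hj1 hjd hspread
end

section
/- Assume j_r > t_1 + ... + t_{r-1} + 1 for all r = 1,...,d and j_r <= t_1 + ... + t_r for all r = 1,...,d-1, and set I = B_t(u). Fix i in {1,...,d} and define a t-spread monomial v as follows: if i = 1 or j_i - j_{i-1} > t_{i-1}, set v = x_{j_i - 1}·(u/x_{j_i}); otherwise let l = max{ m >= 2 : j_p - j_{p-1} = t_{p-1} for all p = m,...,i } and set v = (prod_{r=1}^{l-2} x_{j_r})·(prod_{r=l-1}^{i} x_{j_r - 1})·(prod_{r=i+1}^{d} x_{j_r}). Then the restriction I^{<= 1 - e_{j_i}} equals B_t(v), where 1 - e_{j_i} is the 0/1 exponent vector whose j_i-th entry is 0 and all other entries are 1. -/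
open Finset MvPolynomial

/-- The restriction `I^{≤ 1 - e_{j i}}` of `I = B_t(u)`: the ideal generated by the
minimal monomial generators of `I` not divisible by `x_{j i}` (all generators being
squarefree). -/
noncomputable def restrAt (K : Type*) [Field K] (n d : ℕ) [NeZero n] (t j : ℕ → ℕ)
    (i₀ : ℕ) : Ideal (MvPolynomial (Fin n) K) :=
  Ideal.span {m | m ∈ (fun i => monOf K n d i) '' spreadIdx d t j ∧ ¬ xv K n (j i₀) ∣ m}

/-! A generator `x_{i 1} ⋯ x_{i d}` of `B_t(u)` can only be divisible by `x_{j i₀}` through its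
`i₀`-th factor: earlier factors satisfy `i r ≤ j r < j i₀`, and later ones exceed
`t 1 + ⋯ + t i₀ ≥ j i₀` by spreadness. So the restriction is generated by the `t`-spread
monomials of `B_t(u)` with `i i₀ < j i₀`. When `j` is tight on a run `a, …, i₀`, i.e.
`j p = j (p-1) + t (p-1)`, the spread condition propagates `i i₀ < j i₀` down the run,
so these are exactly the generators of `B_t(v)`, where `v` lowers every index of the run by one. -/

section Divisibility

variable (K : Type*) [Field K] {n : ℕ} [NeZero n]

lemma xv_dvd_xv_iff {p q : ℕ} (hp : 1 ≤ p) (hpn : p ≤ n) (hq : 1 ≤ q) (hqn : q ≤ n) :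
    xv K n p ∣ xv K n q ↔ p = q := by
  rw [xv, xv, X_dvd_X]
  refine ⟨fun h => ?_, fun h => h ▸ rfl⟩
  have h' := congrArg Fin.val h
  rw [Fin.val_natCast, Fin.val_natCast, Nat.mod_eq_of_lt (by omega),
    Nat.mod_eq_of_lt (by omega)] at h'
  omega

lemma xv_dvd_monOf_iff {e p : ℕ} {i : ℕ → ℕ} (hi : ∀ r, 1 ≤ r → r ≤ e → 1 ≤ i r ∧ i r ≤ n)
    (hp : 1 ≤ p) (hpn : p ≤ n) :
    xv K n p ∣ monOf K n e i ↔ ∃ r, 1 ≤ r ∧ r ≤ e ∧ i r = p := by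
  have hprime : Prime (xv K n p) := X_prime
  rw [monOf, hprime.dvd_finsetProd_iff]
  simp only [Finset.mem_Icc]
  refine exists_congr fun r => ⟨fun ⟨hr, h⟩ => ?_, fun ⟨h1, h2, h⟩ => ⟨⟨h1, h2⟩, h ▸ dvd_rfl⟩⟩
  have hir := hi r hr.1 hr.2
  exact ⟨hr.1, hr.2, ((xv_dvd_xv_iff K hp hpn hir.1 hir.2).1 h).symm⟩

lemma restrAt_eq_span {d : ℕ} {t j : ℕ → ℕ} {i₀ : ℕ} (hjn : ∀ r, 1 ≤ r → r ≤ d → j r ≤ n)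
    (hj : 1 ≤ j i₀) (hjn₀ : j i₀ ≤ n) :
    restrAt K n d t j i₀ = Ideal.span (monOf K n d ''
      {i ∈ spreadIdx d t j | ∀ r, 1 ≤ r → r ≤ d → i r ≠ j i₀}) := by
  rw [restrAt]
  congr 1
  ext m
  constructor
  · rintro ⟨⟨i, hi, rfl⟩, hndvd⟩
    refine ⟨i, ⟨hi, fun r h1 h2 heq => hndvd ?_⟩, rfl⟩
    exact dvd_trans (heq ▸ dvd_rfl) (Finset.dvd_prod_of_mem _ (Finset.mem_Icc.2 ⟨h1, h2⟩))
  · rintro ⟨i, ⟨hi, hne⟩, rfl⟩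
    have hin : ∀ r, 1 ≤ r → r ≤ d → 1 ≤ i r ∧ i r ≤ n := fun r h1 h2 =>
      ⟨(hi.1 r h1 h2).1, (hi.1 r h1 h2).2.trans (hjn r h1 h2)⟩
    refine ⟨⟨i, hi, rfl⟩, ?_⟩
    rw [xv_dvd_monOf_iff K hin hj hjn₀]
    exact fun ⟨r, h1, h2, h⟩ => hne r h1 h2 h

end Divisibility

section Spread

variable {e : ℕ} {t J i : ℕ → ℕ}

lemma sum_lt_of_mem_spreadIdx (hi : i ∈ spreadIdx e t J) {r : ℕ} (hr : 1 ≤ r) (hre : r ≤ e) :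
    ∑ s ∈ Icc 1 (r - 1), t s < i r := by
  induction r, hr using Nat.le_induction with
  | base => exact lt_of_lt_of_le (by simp) (hi.1 1 le_rfl hre).1
  | succ r hr ih =>
    have hsum : ∑ s ∈ Icc 1 r, t s = ∑ s ∈ Icc 1 (r - 1), t s + t r := by
      obtain ⟨k, rfl⟩ := Nat.exists_eq_add_of_le' hr
      exact Finset.sum_Icc_succ_top (by omega) t
    have hspread := hi.2 r hr hre
    simp only [Nat.add_sub_cancel]
    omega

lemma lt_of_mem_spreadIdx_of_le_sum (hi : i ∈ spreadIdx e t J) {c k r : ℕ}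
    (hc : c ≤ ∑ s ∈ Icc 1 k, t s) (hkr : k < r) (hre : r ≤ e) : c < i r :=
  calc c ≤ ∑ s ∈ Icc 1 k, t s := hc
    _ ≤ ∑ s ∈ Icc 1 (r - 1), t s :=
      Finset.sum_le_sum_of_subset (Finset.Icc_subset_Icc le_rfl (by omega))
    _ < i r := sum_lt_of_mem_spreadIdx hi (by omega) hre

def lowerOn (J : ℕ → ℕ) (a b : ℕ) : ℕ → ℕ := fun r => if a ≤ r ∧ r ≤ b then J r - 1 else J r

lemma mem_spreadIdx_lowerOn_iff {a b : ℕ} (hab : a ≤ b) (hb : 1 ≤ b) (hbe : b ≤ e)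
    (hrun : ∀ p, a < p → p ≤ b → J p = J (p - 1) + t (p - 1)) :
    i ∈ spreadIdx e t (lowerOn J a b) ↔ i ∈ spreadIdx e t J ∧ i b < J b := by
  constructor
  · intro hi
    have hle : ∀ r, 1 ≤ r → r ≤ e → 1 ≤ i r ∧ i r ≤ J r := fun r h1 h2 => by
      have := hi.1 r h1 h2
      simp only [lowerOn] at this
      split_ifs at this <;> omega
    have hb' := hi.1 b hb hbe
    simp only [lowerOn, hab, le_rfl, and_self, ite_true] at hb'
    exact ⟨⟨hle, hi.2⟩, by omega⟩
  · rintro ⟨hi, hib⟩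
    have hrun_lt : ∀ m r, 1 ≤ r → a ≤ r → r + m = b → i r < J r := by
      intro m
      induction m with
      | zero => intro r _ _ h; simpa [← h] using hib
      | succ m ih =>
        intro r h1 h2 h
        have hnext := ih (r + 1) (by omega) (by omega) (by omega)
        have hspread := hi.2 r h1 (by omega)
        have htight := hrun (r + 1) (by omega) (by omega)
        rw [Nat.add_sub_cancel] at htight
        omega
    refine ⟨fun r h1 h2 => ⟨(hi.1 r h1 h2).1, ?_⟩, hi.2⟩
    simp only [lowerOn]
    split_ifs with h
    · have hlt := hrun_lt (b - r) r h1 h.1 (by omega)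
      omega
    · exact (hi.1 r h1 h2).2

end Spread

lemma forall_ne_iff_lt_of_mem_spreadIdx {d : ℕ} {t j i : ℕ → ℕ} {i₀ : ℕ}
    (hjmono : ∀ p q, 1 ≤ p → p < q → q ≤ d → j p < j q)
    (hup : ∀ r, 1 ≤ r → r ≤ d - 1 → j r ≤ ∑ s ∈ Icc 1 r, t s)
    (hi₀1 : 1 ≤ i₀) (hi₀d : i₀ ≤ d) (hi : i ∈ spreadIdx d t j) :
    (∀ r, 1 ≤ r → r ≤ d → i r ≠ j i₀) ↔ i i₀ < j i₀ := by
  refine ⟨fun h => lt_of_le_of_ne (hi.1 i₀ hi₀1 hi₀d).2 (h i₀ hi₀1 hi₀d), fun h r h1 h2 => ?_⟩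
  rcases lt_trichotomy r i₀ with hr | rfl | hr
  · have hjr := hjmono r i₀ h1 hr hi₀d
    have hir := (hi.1 r h1 h2).2
    omega
  · exact h.ne
  · exact (lt_of_mem_spreadIdx_of_le_sum hi (hup i₀ hi₀1 (by omega)) hr h2).ne'

theorem stmt17_general (K : Type*) [Field K] (n d : ℕ) [NeZero n] (t j : ℕ → ℕ)
    (hjmono : ∀ p q, 1 ≤ p → p < q → q ≤ d → j p < j q)
    (hjd : j d = n)
    (hlow : ∀ r, 1 ≤ r → r ≤ d → (∑ s ∈ Finset.Icc 1 (r - 1), t s) + 1 < j r)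
    (hup : ∀ r, 1 ≤ r → r ≤ d - 1 → j r ≤ ∑ s ∈ Finset.Icc 1 r, t s)
    (i₀ : ℕ) (hi₀1 : 1 ≤ i₀) (hi₀d : i₀ ≤ d) :
    ((i₀ = 1 ∨ j (i₀ - 1) + t (i₀ - 1) < j i₀) →
      restrAt K n d t j i₀ =
        tBorel K n d t (fun r => if r = i₀ then j i₀ - 1 else j r)) ∧
    (¬ (i₀ = 1 ∨ j (i₀ - 1) + t (i₀ - 1) < j i₀) →
      ∀ l : ℕ, 2 ≤ l →
        (∀ p, l ≤ p → p ≤ i₀ → j p = j (p - 1) + t (p - 1)) →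
        (∀ m, 2 ≤ m → (∀ p, m ≤ p → p ≤ i₀ → j p = j (p - 1) + t (p - 1)) → l ≤ m) →
        restrAt K n d t j i₀ =
          tBorel K n d t (fun r => if l - 1 ≤ r ∧ r ≤ i₀ then j r - 1 else j r)) := by
  have hjn : ∀ r, 1 ≤ r → r ≤ d → j r ≤ n := fun r h1 h2 => by
    rcases h2.eq_or_lt with rfl | h
    · exact hjd.le
    · exact hjd ▸ (hjmono r d h1 h le_rfl).le
  have hrestr : ∀ a ≤ i₀, (∀ p, a < p → p ≤ i₀ → j p = j (p - 1) + t (p - 1)) →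
      restrAt K n d t j i₀ = tBorel K n d t (lowerOn j a i₀) := by
    intro a ha hrun
    rw [restrAt_eq_span K hjn (by have := hlow i₀ hi₀1 hi₀d; omega) (hjn i₀ hi₀1 hi₀d), tBorel]
    congr 2
    ext i
    rw [mem_spreadIdx_lowerOn_iff ha hi₀1 hi₀d hrun, Set.mem_sep_iff]
    exact and_congr_right (forall_ne_iff_lt_of_mem_spreadIdx hjmono hup hi₀1 hi₀d)
  refine ⟨fun _ => ?_, fun _ l hl hrun hmin => ?_⟩
  · convert hrestr i₀ le_rfl (fun p h1 h2 => by omega) using 2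
    funext r
    simp only [lowerOn, ← le_antisymm_iff, eq_comm (a := i₀)]
    split_ifs with h <;> simp [h]
  · have hl : l ≤ i₀ + 1 := hmin (i₀ + 1) (by omega) (fun p h1 h2 => by omega)
    exact hrestr (l - 1) (by omega) (fun p h1 h2 => hrun p (by omega) h2)

/-- Assume `j r > t 1 + ⋯ + t (r-1) + 1` for all `r = 1,…,d` and `j r ≤ t 1 + ⋯ + t r`
for `r = 1,…,d-1`, and fix `i₀ ∈ {1,…,d}`.  If `i₀ = 1` or `j i₀ - j (i₀-1) > t (i₀-1)`,
then `I^{≤ 1 - e_{j i₀}} = B_t(v)` with `v = x_{j i₀ - 1}·(u / x_{j i₀})`; otherwise,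
letting `l` be the least `m ≥ 2` with `j p - j (p-1) = t (p-1)` for all `p = m,…,i₀`
(so that `l` gives the longest such run, i.e. the maximal set of indices), one has
`I^{≤ 1 - e_{j i₀}} = B_t(v)` with
`v = (∏_{r=1}^{l-2} x_{j r})·(∏_{r=l-1}^{i₀} x_{j r - 1})·(∏_{r=i₀+1}^{d} x_{j r})`. -/
theorem stmt17 (K : Type*) [Field K] (n d : ℕ) [NeZero n] (t j : ℕ → ℕ)
    (hd : 2 ≤ d) (ht : ∀ k, 1 ≤ k → k ≤ d - 1 → 1 ≤ t k)
    (hj1 : 1 ≤ j 1) (hjmono : ∀ p q, 1 ≤ p → p < q → q ≤ d → j p < j q)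
    (hjd : j d = n) (hspread : ∀ k, 1 ≤ k → k ≤ d - 1 → j k + t k ≤ j (k + 1))
    (hlow : ∀ r, 1 ≤ r → r ≤ d → (∑ s ∈ Finset.Icc 1 (r - 1), t s) + 1 < j r)
    (hup : ∀ r, 1 ≤ r → r ≤ d - 1 → j r ≤ ∑ s ∈ Finset.Icc 1 r, t s)
    (i₀ : ℕ) (hi₀1 : 1 ≤ i₀) (hi₀d : i₀ ≤ d) :
    ((i₀ = 1 ∨ j (i₀ - 1) + t (i₀ - 1) < j i₀) →
      restrAt K n d t j i₀ =
        tBorel K n d t (fun r => if r = i₀ then j i₀ - 1 else j r)) ∧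
    (¬ (i₀ = 1 ∨ j (i₀ - 1) + t (i₀ - 1) < j i₀) →
      ∀ l : ℕ, 2 ≤ l →
        (∀ p, l ≤ p → p ≤ i₀ → j p = j (p - 1) + t (p - 1)) →
        (∀ m, 2 ≤ m → (∀ p, m ≤ p → p ≤ i₀ → j p = j (p - 1) + t (p - 1)) → l ≤ m) →
        restrAt K n d t j i₀ =
          tBorel K n d t (fun r => if l - 1 ≤ r ∧ r ≤ i₀ then j r - 1 else j r)) :=
  stmt17_general K n d t j hjmono hjd hlow hup i₀ hi₀1 hi₀d
end

section
/- Suppose r in {1,...,d-1} satisfies j_r = t_1 + ... + t_{r-1} + 1. Then j_p = t_1 + ... + t_{p-1} + 1 for all p = 1,...,r, and B_t(u) = (x_{j_1} x_{j_2} ... x_{j_r}) · J, where J is the ideal of S generated by all monomials x_{i_{r+1}} x_{i_{r+2}} ... x_{i_d} with j_r + t_r <= i_{r+1}, i_{p+1} - i_p >= t_p for p = r+1,...,d-1, and i_p <= j_p for all p = r+1,...,d. -/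
open Finset MvPolynomial

/-! A `t`-spread index sequence `c` with `1 ≤ c 1` satisfies `c p ≥ t 1 + ⋯ + t (p-1) + 1`,
and the gaps accumulate: `c p + t p + ⋯ + t (r-1) ≤ c r`. So once `c r` attains its least
possible value, every earlier `c p` is forced to attain its least value too. Applied to `j`
this is the first claim; applied to a generator `x_{i 1} ⋯ x_{i d}` of `B_t(u)` (where
`i r ≤ j r`) it shows that `i` agrees with `j` on `1,…,r`, so every generator is divisible by
`x_{j 1} ⋯ x_{j r}`, and conversely any admissible tail can be prefixed by `j 1,…,j r`. -/

theorem add_sum_Ico_le_of_spread {t c : ℕ → ℕ} {a b : ℕ} (hab : a ≤ b)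
    (hc : ∀ k, a ≤ k → k < b → c k + t k ≤ c (k + 1)) :
    c a + ∑ s ∈ Ico a b, t s ≤ c b := by
  induction b, hab using Nat.le_induction with
  | base => simp
  | succ b hab ih =>
    rw [sum_Ico_succ_top hab]
    have := ih fun k hak hkb => hc k hak (by omega)
    have := hc b hab (by omega)
    omega

theorem Icc_one_sub_one_eq_Ico {p : ℕ} (hp : 1 ≤ p) : Icc 1 (p - 1) = Ico 1 p := by
  obtain ⟨q, rfl⟩ := Nat.exists_eq_add_of_le' hp
  rw [Nat.add_sub_cancel, Ico_add_one_right_eq_Icc]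

theorem eq_sum_add_one_of_spread {t c : ℕ → ℕ} {r p : ℕ} (hc1 : 1 ≤ c 1)
    (hc : ∀ k, 1 ≤ k → k < r → c k + t k ≤ c (k + 1))
    (hcr : c r ≤ ∑ s ∈ Icc 1 (r - 1), t s + 1) (hp : 1 ≤ p) (hpr : p ≤ r) :
    c p = ∑ s ∈ Icc 1 (p - 1), t s + 1 := by
  rw [Icc_one_sub_one_eq_Ico (hp.trans hpr)] at hcr
  rw [Icc_one_sub_one_eq_Ico hp]
  have lower := add_sum_Ico_le_of_spread hp fun k hk hkp => hc k hk (by omega)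
  have upper := add_sum_Ico_le_of_spread hpr fun k hk hkr => hc k (by omega) hkr
  have split := sum_Ico_consecutive t hp hpr
  omega

theorem prod_Icc_one_eq_mul {M : Type*} [CommMonoid M] (f : ℕ → M) {r d : ℕ} (hrd : r ≤ d) :
    ∏ p ∈ Icc 1 d, f p = (∏ p ∈ Icc 1 r, f p) * ∏ p ∈ Icc (r + 1) d, f p := by
  simp only [← Ico_add_one_right_eq_Icc]
  exact (prod_Ico_consecutive f (by omega) (by omega)).symm

theorem eq_sum_add_one_of_mem_spreadIdx {r d p : ℕ} {t i j : ℕ → ℕ} (hrd : r < d)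
    (hi : i ∈ spreadIdx d t j) (hjr : j r ≤ ∑ s ∈ Icc 1 (r - 1), t s + 1) (hp : 1 ≤ p)
    (hpr : p ≤ r) : i p = ∑ s ∈ Icc 1 (p - 1), t s + 1 :=
  eq_sum_add_one_of_spread (hi.1 1 le_rfl (by omega)).1 (fun k hk hkr => hi.2 k hk (by omega))
    ((hi.1 r (by omega) (by omega)).2.trans hjr) hp hpr

/-- Index functions of the tails `x_{i (r+1)} ⋯ x_{i d}` that can follow `x_{j 1} ⋯ x_{j r}`
in a generator of `B_t(x_{j 1} ⋯ x_{j d})`. -/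
def tailIdx (r d : ℕ) (t j : ℕ → ℕ) : Set (ℕ → ℕ) :=
  {i | j r + t r ≤ i (r + 1) ∧ (∀ p, r + 1 ≤ p → p ≤ d → i p ≤ j p) ∧
    (∀ p, r + 1 ≤ p → p + 1 ≤ d → i p + t p ≤ i (p + 1))}

theorem mem_tailIdx_of_mem_spreadIdx {r d : ℕ} {t i j : ℕ → ℕ} (hr : 1 ≤ r) (hrd : r < d)
    (hi : i ∈ spreadIdx d t j) (hij : i r = j r) : i ∈ tailIdx r d t j :=
  ⟨hij ▸ hi.2 r hr (by omega), fun p hp hpd => (hi.1 p (by omega) hpd).2,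
    fun p hp hpd => hi.2 p (by omega) hpd⟩

theorem ite_mem_spreadIdx {r d : ℕ} {t i j : ℕ → ℕ} (hr : 1 ≤ r) (hj1 : 1 ≤ j 1)
    (hj : ∀ k, 1 ≤ k → k < r → j k + t k ≤ j (k + 1)) (hi : i ∈ tailIdx r d t j) :
    (fun p => if p ≤ r then j p else i p) ∈ spreadIdx d t j := by
  obtain ⟨hfirst, hile, hispread⟩ := hi
  have hjpos : ∀ p, 1 ≤ p → p ≤ r → 1 ≤ j p := fun p hp hpr => by
    have := add_sum_Ico_le_of_spread hp fun k hk hkp => hj k hk (by omega)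
    omega
  refine ⟨fun p hp hpd => ?_, fun k hk hkd => ?_⟩
  · dsimp only
    split_ifs with hpr
    · exact ⟨hjpos p hp hpr, le_rfl⟩
    · have := add_sum_Ico_le_of_spread (show r + 1 ≤ p by omega)
        fun k hk hkp => hispread k hk (by omega)
      have := hjpos r hr le_rfl
      exact ⟨by omega, hile p (by omega) hpd⟩
  · dsimp only
    split_ifs
    · exact hj k hk (by omega)
    · exact (show k = r by omega) ▸ hfirst
    · omega
    · exact hispread k (by omega) hkd

theorem stmt19_general (K : Type*) [Field K] (n d : ℕ) [NeZero n] (t j : ℕ → ℕ)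
    (hj1 : 1 ≤ j 1) (hspread : ∀ k, 1 ≤ k → k ≤ d - 1 → j k + t k ≤ j (k + 1))
    (r : ℕ) (hr1 : 1 ≤ r) (hrd : r ≤ d - 1)
    (hjr : j r = (∑ s ∈ Finset.Icc 1 (r - 1), t s) + 1) :
    (∀ p, 1 ≤ p → p ≤ r → j p = (∑ s ∈ Finset.Icc 1 (p - 1), t s) + 1) ∧
    tBorel K n d t j =
      Ideal.span {∏ p ∈ Finset.Icc 1 r, xv K n (j p)} *
        Ideal.span ((fun i => ∏ p ∈ Finset.Icc (r + 1) d, xv K n (i p)) ''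
          {i : ℕ → ℕ | j r + t r ≤ i (r + 1) ∧
            (∀ p, r + 1 ≤ p → p ≤ d → i p ≤ j p) ∧
            (∀ p, r + 1 ≤ p → p + 1 ≤ d → i p + t p ≤ i (p + 1))}) := by
  have hjspread : ∀ k, 1 ≤ k → k < r → j k + t k ≤ j (k + 1) :=
    fun k hk hkr => hspread k hk (by omega)
  have hjmin := fun p => eq_sum_add_one_of_spread (p := p) hj1 hjspread hjr.le
  have prefix_eq : ∀ i ∈ spreadIdx d t j, ∀ p, 1 ≤ p → p ≤ r → i p = j p :=
    fun i hi p hp hpr =>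
      (eq_sum_add_one_of_mem_spreadIdx (by omega) hi hjr.le hp hpr).trans (hjmin p hp hpr).symm
  have hmonOf : ∀ c : ℕ → ℕ, monOf K n d c =
      (∏ p ∈ Icc 1 r, xv K n (c p)) * ∏ p ∈ Icc (r + 1) d, xv K n (c p) :=
    fun c => prod_Icc_one_eq_mul _ (by omega)
  refine ⟨hjmin, ?_⟩
  rw [Ideal.span_mul_span', Set.singleton_mul, Set.image_image, tBorel]
  congr 1
  ext y
  constructor
  · rintro ⟨i, hi, rfl⟩
    refine ⟨i, mem_tailIdx_of_mem_spreadIdx hr1 (by omega) hi (prefix_eq i hi r hr1 le_rfl), ?_⟩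
    dsimp only
    rw [hmonOf]
    congr 1
    exact prod_congr rfl fun p hp =>
      congrArg (xv K n) (prefix_eq i hi p (mem_Icc.1 hp).1 (mem_Icc.1 hp).2).symm
  · rintro ⟨i, hi, rfl⟩
    refine ⟨_, ite_mem_spreadIdx hr1 hj1 hjspread hi, ?_⟩
    dsimp only
    rw [hmonOf]
    congr 1 <;> refine prod_congr rfl fun p hp => ?_
    · rw [if_pos (mem_Icc.1 hp).2]
    · rw [if_neg (by have := (mem_Icc.1 hp).1; omega)]

/-- If `r ∈ {1,…,d-1}` satisfies `j r = t 1 + ⋯ + t (r-1) + 1`, then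
`j p = t 1 + ⋯ + t (p-1) + 1` for all `p = 1,…,r`, and
`B_t(u) = (x_{j 1} ⋯ x_{j r}) · J`, where `J` is generated by all monomials
`x_{i (r+1)} ⋯ x_{i d}` with `j r + t r ≤ i (r+1)`, `i (p+1) - i p ≥ t p` for
`p = r+1,…,d-1`, and `i p ≤ j p` for `p = r+1,…,d`. -/
theorem stmt19 (K : Type*) [Field K] (n d : ℕ) [NeZero n] (t j : ℕ → ℕ)
    (hd : 2 ≤ d) (ht : ∀ k, 1 ≤ k → k ≤ d - 1 → 1 ≤ t k)
    (hj1 : 1 ≤ j 1) (hjmono : ∀ p q, 1 ≤ p → p < q → q ≤ d → j p < j q)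
    (hjd : j d = n) (hspread : ∀ k, 1 ≤ k → k ≤ d - 1 → j k + t k ≤ j (k + 1))
    (r : ℕ) (hr1 : 1 ≤ r) (hrd : r ≤ d - 1)
    (hjr : j r = (∑ s ∈ Finset.Icc 1 (r - 1), t s) + 1) :
    (∀ p, 1 ≤ p → p ≤ r → j p = (∑ s ∈ Finset.Icc 1 (p - 1), t s) + 1) ∧
    tBorel K n d t j =
      Ideal.span {∏ p ∈ Finset.Icc 1 r, xv K n (j p)} *
        Ideal.span ((fun i => ∏ p ∈ Finset.Icc (r + 1) d, xv K n (i p)) ''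
          {i : ℕ → ℕ | j r + t r ≤ i (r + 1) ∧
            (∀ p, r + 1 ≤ p → p ≤ d → i p ≤ j p) ∧
            (∀ p, r + 1 ≤ p → p + 1 ≤ d → i p + t p ≤ i (p + 1))}) :=
  stmt19_general K n d t j hj1 hspread r hr1 hrd hjr
end
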